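/- Let w = pTSq and w' = pSTq be words over {S,T}. Then (#STST(w) + #TSTS(w)) − (#STST(w') + #TSTS(w')) = #TS(p) + #TS(q) + #S(p)·#T(q) − #ST(p) − #ST(q) − #T(p)·#S(q). -/

import Mathlib

inductive Letter | S | T
deriving DecidableEq, Repr

open Letter

/-- Number of occurrences of `u` as a (not necessarily contiguous) subsequence of `w`. -/
def cnt (u w : List Letter) : ℕ := w.sublists.count u

/-!
An occurrence of `u` in `a ++ b` splits `u` into a prefix occurring in `a` and a suffix
occurring in `b`, so subsequence counts of a concatenation are a convolution over the splittings
of `u`. Expanding both sides of the identity this way expresses everything through the counts of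
words of length at most three in `p` and `q`; what remains is a polynomial identity in them.
-/

namespace List

variable {α : Type*} [DecidableEq α]

theorem count_sublists_eq_count_sublists' (u w : List α) :
    w.sublists.count u = w.sublists'.count u :=
  (sublists_perm_sublists' w).count_eq u

@[simp]
theorem count_nil_sublists (w : List α) : w.sublists.count [] = 1 := by
  induction w with
  | nil => rfl
  | cons x w ih =>
    rw [count_sublists_eq_count_sublists'] at *
    rw [sublists'_cons, count_append, ih, count_eq_zero.mpr (by simp)]

theorem count_cons_sublists_cons (y x : α) (u w : List α) :
    (x :: w).sublists.count (y :: u) =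
      w.sublists.count (y :: u) + if y = x then w.sublists.count u else 0 := by
  simp only [count_sublists_eq_count_sublists', sublists'_cons, count_append]
  congr 1
  split_ifs with h
  · subst h
    exact count_map_of_injective _ _ cons_injective u
  · exact count_eq_zero.mpr (by simp [Ne.symm h])

@[simp]
theorem count_cons_sublists_nil (y : α) (u : List α) :
    ([] : List α).sublists.count (y :: u) = 0 := by
  simp

theorem count_singleton_sublists (x : α) (w : List α) : w.sublists.count [x] = w.count x := by
  induction w with
  | nil => rfl
  | cons y w ih =>
    rw [count_cons_sublists_cons, ih, count_nil_sublists, count_cons]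
    by_cases h : x = y
    · simp [h]
    · simp [h, Ne.symm h]

theorem count_sublists_append (u a b : List α) :
    (a ++ b).sublists.count u = ∑ i ∈ Finset.range (u.length + 1),
      a.sublists.count (u.take i) * b.sublists.count (u.drop i) := by
  induction a generalizing u with
  | nil =>
    cases u with
    | nil => simp
    | cons y u => simp [Finset.sum_range_succ']
  | cons x a ih =>
    cases u with
    | nil => simp
    | cons y u =>
      rw [cons_append, count_cons_sublists_cons, ih, ih]
      simp only [Finset.sum_range_succ' _ (u.length + 1), take_succ_cons, drop_succ_cons,
        take_zero, drop_zero, count_nil_sublists, count_cons_sublists_cons, one_mul, add_mul,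
        Finset.sum_add_distrib, length_cons]
      split_ifs
      · ring
      · simp

end List

theorem stmt3 (p q : List Letter) :
    ((cnt [S,T,S,T] (p ++ [T,S] ++ q) + cnt [T,S,T,S] (p ++ [T,S] ++ q) : ℤ)
        - (cnt [S,T,S,T] (p ++ [S,T] ++ q) + cnt [T,S,T,S] (p ++ [S,T] ++ q) : ℤ))
      = (cnt [T,S] p : ℤ) + cnt [T,S] q + p.count S * q.count T
        - cnt [S,T] p - cnt [S,T] q - p.count T * q.count S := by
  simp only [cnt, List.append_assoc, List.count_sublists_append, Finset.sum_range_succ,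
    Finset.sum_range_zero, List.length_cons, List.length_nil, List.take_succ_cons,
    List.take_zero, List.drop_succ_cons, List.drop_zero, List.take_nil, List.drop_nil,
    List.count_nil_sublists, List.count_singleton_sublists, List.count_cons_sublists_cons,
    List.count_cons_sublists_nil, reduceCtorEq, reduceIte]
  push_cast
  ring
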